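/- Let G be a finite simple graph on n vertices and q a positive integer. If G contains no q-bipartite hole, i.e., there do not exist two disjoint sets of q vertices each with no edges of G between them, then the zero forcing number satisfies Z(G) ≥ n − 2q. -/

import Mathlib

/-- One step of the zero forcing colour-change rule: some black vertex `v ∈ S`
whose unique white neighbour is `w` forces `w`, giving `T = insert w S`. -/
def zfStep {V : Type*} [DecidableEq V] (G : SimpleGraph V) (S T : Finset V) : Prop :=
  ∃ v ∈ S, ∃ w, w ∉ S ∧ G.Adj v w ∧ (∀ u, G.Adj v u → u ∉ S → u = w) ∧ T = insert w S

/-- `S` is a zero forcing set: iterating the colour-change rule from `S` reaches all of `V`. -/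
def IsZeroForcingSet {V : Type*} [DecidableEq V] [Fintype V] (G : SimpleGraph V)
    (S : Finset V) : Prop :=
  Relation.ReflTransGen (zfStep G) S Finset.univ

/-- The zero forcing number: minimum size of a zero forcing set. -/
noncomputable def zeroForcingNumber {V : Type*} [DecidableEq V] [Fintype V]
    (G : SimpleGraph V) : ℕ :=
  sInf {k | ∃ S : Finset V, IsZeroForcingSet G S ∧ S.card = k}

/-- `(v 0, …, v (k-1))` is a Z-sequence: each `v i` has a neighbour outside
`⋃_{j<i} N[v j]`. -/
def IsZSeq {V : Type*} (G : SimpleGraph V) {k : ℕ} (v : Fin k → V) : Prop :=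
  ∀ i : Fin k, ∃ x, G.Adj (v i) x ∧ ∀ j : Fin k, j < i → x ≠ v j ∧ ¬ G.Adj (v j) x

/-- `w` is a witness sequence for the Z-sequence `v`: each `w i` is a neighbour of `v i`
lying outside `⋃_{j<i} N[v j]`. -/
def IsWitnessSeq {V : Type*} (G : SimpleGraph V) {k : ℕ} (v w : Fin k → V) : Prop :=
  ∀ i : Fin k, G.Adj (v i) (w i) ∧ ∀ j : Fin k, j < i → w i ≠ v j ∧ ¬ G.Adj (v j) (w i)

/-- The Z-Grundy domination number: maximum length of a Z-sequence. -/
noncomputable def zGrundyNumber {V : Type*} [Fintype V] (G : SimpleGraph V) : ℕ :=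
  sSup {k | ∃ v : Fin k → V, IsZSeq G v}

/-- `G` has a `q`-bipartite hole: two disjoint sets of `q` vertices each with no edges
of `G` between them. -/
def HasBipartiteHole {V : Type*} (G : SimpleGraph V) (q : ℕ) : Prop :=
  ∃ A B : Finset V, A.card = q ∧ B.card = q ∧ Disjoint A B ∧
    ∀ a ∈ A, ∀ b ∈ B, ¬ G.Adj a b

open Finset

/-!
List the forces of a zero forcing process started from `S` as pairs `(v i, w i)`, `v i` forcing
`w i`. When `v j` forces, its only white neighbour is `w j`, so every vertex forced later lies
outside the closed neighbourhood of `v j`: the forces form a witness sequence of length `n - |S|`.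
In a witness sequence of length `2q` the first `q` forcing vertices and the last `q` forced
vertices form a `q`-bipartite hole.
-/

namespace IsWitnessSeq

variable {V : Type*} {G : SimpleGraph V} {k : ℕ} {v w : Fin k → V}

theorem injective_left (h : IsWitnessSeq G v w) : Function.Injective v :=
  Function.Injective.of_lt_imp_ne fun i j hij hv =>
    (h j).2 i hij |>.2 (hv ▸ (h j).1)

theorem injective_right (h : IsWitnessSeq G v w) : Function.Injective w :=
  Function.Injective.of_lt_imp_ne fun i j hij hw =>
    (h j).2 i hij |>.2 (hw ▸ (h i).1)

theorem castLE (h : IsWitnessSeq G v w) {m : ℕ} (hm : m ≤ k) :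
    IsWitnessSeq G (v ∘ Fin.castLE hm) (w ∘ Fin.castLE hm) :=
  fun i => ⟨(h (i.castLE hm)).1, fun j hji => (h (i.castLE hm)).2 (j.castLE hm) hji⟩

theorem cons (h : IsWitnessSeq G v w) {a b : V} (hab : G.Adj a b)
    (hfar : ∀ i, w i ≠ a ∧ ¬ G.Adj a (w i)) :
    IsWitnessSeq G (Fin.cons a v : Fin (k + 1) → V) (Fin.cons b w) := by
  intro i
  refine Fin.cases ⟨hab, fun j hj => absurd hj (Fin.not_lt_zero j)⟩ (fun i => ?_) i
  refine ⟨(h i).1, fun j hj => ?_⟩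
  refine Fin.cases ?_ (fun j hj => ?_) j hj
  · simpa using hfar i
  · simpa using (h i).2 j (Fin.succ_lt_succ_iff.1 hj)

theorem hasBipartiteHole {q : ℕ} {v w : Fin (q + q) → V} (h : IsWitnessSeq G v w) :
    HasBipartiteHole G q := by
  classical
  have early_late : ∀ i j : Fin q, Fin.castAdd q i < Fin.natAdd q j := fun i j => by
    simp only [Fin.lt_def, Fin.val_castAdd, Fin.val_natAdd]; omega
  refine ⟨univ.image (v ∘ Fin.castAdd q), univ.image (w ∘ Fin.natAdd q), ?_, ?_, ?_, ?_⟩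
  · rw [card_image_of_injective _ (h.injective_left.comp (Fin.castAdd_injective q q))]
    simp
  · rw [card_image_of_injective _ (h.injective_right.comp (Fin.natAdd_injective q q))]
    simp
  · simp only [disjoint_left, mem_image, mem_univ, true_and, Function.comp_apply]
    rintro _ ⟨i, rfl⟩ ⟨j, hj⟩
    exact ((h _).2 _ (early_late i j)).1 hj
  · simp only [mem_image, mem_univ, true_and, Function.comp_apply]
    rintro _ ⟨i, rfl⟩ _ ⟨j, rfl⟩
    exact ((h _).2 _ (early_late i j)).2

end IsWitnessSeq

theorem exists_isWitnessSeq_of_reflTransGen_zfStep {V : Type*} [DecidableEq V]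
    {G : SimpleGraph V} {S T : Finset V} (h : Relation.ReflTransGen (zfStep G) S T) :
    ∃ (k : ℕ) (v w : Fin k → V),
      IsWitnessSeq G v w ∧ (∀ i, w i ∉ S) ∧ S.card + k = T.card := by
  induction h using Relation.ReflTransGen.head_induction_on with
  | refl => exact ⟨0, Fin.elim0, Fin.elim0, fun i => i.elim0, fun i => i.elim0, rfl⟩
  | @head S _ step _ ih =>
    obtain ⟨a, ha, b, hb, hab, honly, rfl⟩ := step
    obtain ⟨k, v, w, hw, hwS, hcard⟩ := ih
    have hout (i) : w i ≠ b ∧ w i ∉ S := by simpa [not_or] using hwS i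
    have hfar (i) : w i ≠ a ∧ ¬ G.Adj a (w i) :=
      ⟨fun hwa => (hout i).2 (hwa ▸ ha), fun hadj => (hout i).1 (honly _ hadj (hout i).2)⟩
    refine ⟨k + 1, Fin.cons a v, Fin.cons b w, hw.cons hab hfar,
      fun i => Fin.cases hb (fun i => (hout i).2) i, ?_⟩
    rw [← hcard, card_insert_of_notMem hb]
    omega

theorem zeroForcingNumber_ge_of_no_hole_general {V : Type*} [Fintype V] [DecidableEq V]
    (G : SimpleGraph V) (q : ℕ) (h : ¬ HasBipartiteHole G q) :
    Fintype.card V - 2 * q ≤ zeroForcingNumber G := by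
  refine le_csInf ⟨_, univ, .refl, rfl⟩ ?_
  rintro _ ⟨S, hS, rfl⟩
  obtain ⟨k, v, w, hw, -, hcard⟩ := exists_isWitnessSeq_of_reflTransGen_zfStep hS
  have hk : k < 2 * q := by
    by_contra! hk
    exact h (hw.castLE (two_mul q ▸ hk)).hasBipartiteHole
  rw [card_univ] at hcard
  omega

/-- If a finite simple graph `G` on `n` vertices contains no `q`-bipartite hole
(`q > 0`), then `Z(G) ≥ n − 2q`. -/
theorem zeroForcingNumber_ge_of_no_hole {V : Type*} [Fintype V] [DecidableEq V]
    (G : SimpleGraph V) (q : ℕ) (hq : 0 < q) (h : ¬ HasBipartiteHole G q) :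
    Fintype.card V - 2 * q ≤ zeroForcingNumber G :=
  zeroForcingNumber_ge_of_no_hole_general G q h
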